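/- Let f : ℝ^n → ℝ be an L_f-Lipschitz function, ξ : ℝ^(n-1) → ℝ an L_ξ-Lipschitz function, δ : ℝ^n → (0,1) a continuous function, and g : ℝ^(n-1) → ℝ a function satisfying |g(x̃) − f(x̃, ξ(x̃))| < δ′(x̃) for all x̃, where δ′(x̃) := inf { δ(x̃, y) : y ∈ [ξ(x̃) − L_ξ − 1, ξ(x̃) + L_ξ + 1] }. Regard g as an n-variable function constant in the last coordinate. Then for every x = (x̃, x_n) with dist(x, Γ_ξ) < δ(x) one has |g(x̃) − f(x)| < (1 + L_f(L_ξ + 1))·δ(x). -/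

import Mathlib

/-!
For a `K`-Lipschitz `ξ`, the vertical distance `|t - ξ x|` is at most `(K + 1)` times the
distance from `(x, t)` to the graph of `ξ`. When that distance is below `δ (x, t) < 1`, the
height `t` therefore lies in the window over which `δ' x` is an infimum, so `δ' x ≤ δ (x, t)`,
and the triangle inequality through `(x, ξ x)` gives
`|g x - f (x, t)| < δ (x, t) + L_f (L_ξ + 1) δ (x, t)`.
-/

open Metric

noncomputable def mkPt {m : ℕ} (x : EuclideanSpace ℝ (Fin m)) (t : ℝ) :
    WithLp 2 (EuclideanSpace ℝ (Fin m) × ℝ) :=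
  (WithLp.equiv 2 (EuclideanSpace ℝ (Fin m) × ℝ)).symm (x, t)

noncomputable def graphOf {m : ℕ} (ξ : EuclideanSpace ℝ (Fin m) → ℝ) :
    Set (WithLp 2 (EuclideanSpace ℝ (Fin m) × ℝ)) :=
  {p | ∃ x, p = mkPt x (ξ x)}

section Graph

variable {m : ℕ}

lemma dist_mkPt (x y : EuclideanSpace ℝ (Fin m)) (t s : ℝ) :
    dist (mkPt x t) (mkPt y s) = √(dist x y ^ 2 + dist t s ^ 2) :=
  WithLp.prod_dist_eq_of_L2 _ _

lemma dist_le_dist_mkPt (x y : EuclideanSpace ℝ (Fin m)) (t s : ℝ) :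
    dist x y ≤ dist (mkPt x t) (mkPt y s) := by
  rw [dist_mkPt]
  exact Real.le_sqrt_of_sq_le (le_add_of_nonneg_right (sq_nonneg _))

lemma abs_sub_le_dist_mkPt (x y : EuclideanSpace ℝ (Fin m)) (t s : ℝ) :
    |t - s| ≤ dist (mkPt x t) (mkPt y s) := by
  rw [dist_mkPt, ← Real.dist_eq]
  exact Real.le_sqrt_of_sq_le (le_add_of_nonneg_left (sq_nonneg _))

lemma dist_mkPt_mkPt_same (x : EuclideanSpace ℝ (Fin m)) (t s : ℝ) :
    dist (mkPt x t) (mkPt x s) = |t - s| := by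
  rw [dist_mkPt, dist_self, Real.dist_eq, zero_pow two_ne_zero, zero_add,
    Real.sqrt_sq (abs_nonneg _)]

variable {K : NNReal} {ξ : EuclideanSpace ℝ (Fin m) → ℝ}

lemma LipschitzWith.abs_sub_le_mul_infDist_graphOf (hξ : LipschitzWith K ξ)
    (x : EuclideanSpace ℝ (Fin m)) (t : ℝ) :
    |t - ξ x| ≤ ((K : ℝ) + 1) * infDist (mkPt x t) (graphOf ξ) := by
  have hK : (0 : ℝ) < K + 1 := by positivity
  rw [← div_le_iff₀' hK, le_infDist (⟨_, x, rfl⟩ : (graphOf ξ).Nonempty)]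
  rintro _ ⟨y, rfl⟩
  rw [div_le_iff₀' hK]
  set D := dist (mkPt x t) (mkPt y (ξ y))
  have hξxy : |ξ y - ξ x| ≤ K * D := by
    rw [← Real.dist_eq]
    calc dist (ξ y) (ξ x) ≤ K * dist y x := hξ.dist_le_mul y x
      _ ≤ K * D := by
        rw [dist_comm]
        exact mul_le_mul_of_nonneg_left (dist_le_dist_mkPt x y t (ξ y)) K.coe_nonneg
  calc |t - ξ x| ≤ |t - ξ y| + |ξ y - ξ x| := abs_sub_le _ _ _
    _ ≤ D + K * D := add_le_add (abs_sub_le_dist_mkPt x y t (ξ y)) hξxy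
    _ = (K + 1) * D := by ring

lemma LipschitzWith.mem_Icc_of_infDist_graphOf_le_one (hξ : LipschitzWith K ξ)
    {x : EuclideanSpace ℝ (Fin m)} {t : ℝ} (h : infDist (mkPt x t) (graphOf ξ) ≤ 1) :
    t ∈ Set.Icc (ξ x - K - 1) (ξ x + K + 1) := by
  have hvert : |t - ξ x| ≤ K + 1 :=
    (hξ.abs_sub_le_mul_infDist_graphOf x t).trans (mul_le_of_le_one_right (by positivity) h)
  rw [abs_le] at hvert
  constructor <;> linarith [hvert.1, hvert.2]

end Graph

theorem stmt11_general {m : ℕ} (Lf Lξ : NNReal)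
    (f : WithLp 2 (EuclideanSpace ℝ (Fin m) × ℝ) → ℝ) (hf : LipschitzWith Lf f)
    (ξ : EuclideanSpace ℝ (Fin m) → ℝ) (hξ : LipschitzWith Lξ ξ)
    (δ : WithLp 2 (EuclideanSpace ℝ (Fin m) × ℝ) → ℝ)
    (hδr : ∀ p, δ p ∈ Set.Ioo (0 : ℝ) 1)
    (g : EuclideanSpace ℝ (Fin m) → ℝ)
    (δ' : EuclideanSpace ℝ (Fin m) → ℝ)
    (hδ' : ∀ x, δ' x = sInf ((fun y => δ (mkPt x y)) ''
        Set.Icc (ξ x - (Lξ : ℝ) - 1) (ξ x + (Lξ : ℝ) + 1)))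
    (hg : ∀ x, |g x - f (mkPt x (ξ x))| < δ' x) :
    ∀ (x : EuclideanSpace ℝ (Fin m)) (t : ℝ),
      infDist (mkPt x t) (graphOf ξ) < δ (mkPt x t) →
      |g x - f (mkPt x t)| < (1 + (Lf : ℝ) * ((Lξ : ℝ) + 1)) * δ (mkPt x t) := by
  intro x t hdist
  set p := mkPt x t
  set q := mkPt x (ξ x)
  have hδ'_le : δ' x ≤ δ p := by
    rw [hδ' x]
    refine csInf_le ⟨0, ?_⟩ ⟨t, hξ.mem_Icc_of_infDist_graphOf_le_one (hdist.trans (hδr p).2).le, rfl⟩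
    rintro _ ⟨y, -, rfl⟩
    exact (hδr _).1.le
  have hfqp : |f q - f p| ≤ Lf * ((Lξ + 1) * infDist p (graphOf ξ)) := by
    rw [abs_sub_comm, ← Real.dist_eq]
    calc dist (f p) (f q) ≤ Lf * dist p q := hf.dist_le_mul p q
      _ = Lf * |t - ξ x| := by rw [dist_mkPt_mkPt_same]
      _ ≤ _ := mul_le_mul_of_nonneg_left (hξ.abs_sub_le_mul_infDist_graphOf x t) Lf.coe_nonneg
  calc |g x - f p| ≤ |g x - f q| + |f q - f p| := abs_sub_le _ _ _
    _ < δ p + Lf * ((Lξ + 1) * δ p) :=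
        add_lt_add_of_lt_of_le ((hg x).trans_le hδ'_le) (hfqp.trans (by gcongr))
    _ = (1 + Lf * (Lξ + 1)) * δ p := by ring

theorem stmt11 {m : ℕ} (Lf Lξ : NNReal)
    (f : WithLp 2 (EuclideanSpace ℝ (Fin m) × ℝ) → ℝ) (hf : LipschitzWith Lf f)
    (ξ : EuclideanSpace ℝ (Fin m) → ℝ) (hξ : LipschitzWith Lξ ξ)
    (δ : WithLp 2 (EuclideanSpace ℝ (Fin m) × ℝ) → ℝ) (hδc : Continuous δ)
    (hδr : ∀ p, δ p ∈ Set.Ioo (0 : ℝ) 1)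
    (g : EuclideanSpace ℝ (Fin m) → ℝ)
    (δ' : EuclideanSpace ℝ (Fin m) → ℝ)
    (hδ' : ∀ x, δ' x = sInf ((fun y => δ (mkPt x y)) ''
        Set.Icc (ξ x - (Lξ : ℝ) - 1) (ξ x + (Lξ : ℝ) + 1)))
    (hg : ∀ x, |g x - f (mkPt x (ξ x))| < δ' x) :
    ∀ (x : EuclideanSpace ℝ (Fin m)) (t : ℝ),
      infDist (mkPt x t) (graphOf ξ) < δ (mkPt x t) →
      |g x - f (mkPt x t)| < (1 + (Lf : ℝ) * ((Lξ : ℝ) + 1)) * δ (mkPt x t) :=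
  stmt11_general Lf Lξ f hf ξ hξ δ hδr g δ' hδ' hg
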